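/- arXiv:2005.12689 — 2 statements merged into one kernel-verified Lean document; each statement's English description precedes it below -/
import Mathlib

section
/- Let d ≥ 3 and let ρ_t(x) = (2πt)^{-d/2} exp(−|x|²/(2t)) denote the standard heat kernel on ℝ^d. Let V : ℝ^d → ℝ be measurable, nonnegative and integrable. Then there exists a constant C depending only on d such that for every T > 0 and every ℓ with 0 < ℓ ≤ T/2, ∫_ℓ^{T−ℓ} ∫_{ℝ^d} (ρ_t(z) · ρ_{T−t}(z) / ρ_T(0)) · V(√2 · z) dz dt ≤ C · ‖V‖_{L¹} · ℓ^{−(d−2)/2}. -/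
/-!
Bounding both heat kernels in the numerator by their values at `z = 0` bounds the bridge density
at time `t` by `(2π t(T-t)/T)^{-d/2}`, and `t(T-t)/T ≥ min(t, T-t)/2`; hence the inner integral
is at most `π^{-d/2} (t^{-d/2} + (T-t)^{-d/2}) ‖V‖_{L¹}`, where `V(√2 ·)` has `L¹` norm at most that
of `V`. Since `d/2 > 1`, integrating `t^{-d/2}` and its reflection over `[ℓ, T-ℓ]` costs at
most `ℓ^{1-d/2}/(d/2-1)` each.
-/

open MeasureTheory Real

/-- The standard heat kernel `ρ_t(z) = (2πt)^{-d/2} exp(-|z|²/(2t))` on `ℝ^d`. -/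
noncomputable def heatKernel (d : ℕ) (t : ℝ) (z : EuclideanSpace ℝ (Fin d)) : ℝ :=
  (2 * π * t) ^ (-(d : ℝ) / 2) * Real.exp (-‖z‖ ^ 2 / (2 * t))

open Set

lemma setIntegral_mono_on_of_nonneg {X : Type*} [MeasurableSpace X] {μ : Measure X} {s : Set X}
    {f g : X → ℝ} (hs : MeasurableSet s) (hf : ∀ x ∈ s, 0 ≤ f x) (hg : IntegrableOn g s μ)
    (hfg : ∀ x ∈ s, f x ≤ g x) :
    ∫ x in s, f x ∂μ ≤ ∫ x in s, g x ∂μ :=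
  integral_mono_of_nonneg (ae_restrict_of_forall_mem hs hf) hg (ae_restrict_of_forall_mem hs hfg)

lemma integral_comp_smul_le_of_one_le {E : Type*} [NormedAddCommGroup E] [NormedSpace ℝ E]
    [FiniteDimensional ℝ E] [MeasurableSpace E] [BorelSpace E] (μ : Measure E)
    [μ.IsAddHaarMeasure] {f : E → ℝ} (hf : ∀ x, 0 ≤ f x) {R : ℝ} (hR : 1 ≤ R) :
    ∫ x, f (R • x) ∂μ ≤ ∫ x, f x ∂μ := by
  rw [Measure.integral_comp_smul, smul_eq_mul, abs_of_nonneg (by positivity)]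
  exact mul_le_of_le_one_left (integral_nonneg hf) (inv_le_one_of_one_le₀ (one_le_pow₀ hR))

lemma half_min_le_mul_sub_div {t T : ℝ} (ht : 0 < t) (htT : t < T) :
    min t (T - t) / 2 ≤ t * (T - t) / T := by
  rw [le_div_iff₀ (ht.trans htT)]
  rcases le_total t (T - t) with h | h
  · rw [min_eq_left h]; nlinarith
  · rw [min_eq_right h]; nlinarith

lemma rpow_neg_min_le_add {a b p : ℝ} (ha : 0 ≤ a) (hb : 0 ≤ b) :
    min a b ^ (-p) ≤ a ^ (-p) + b ^ (-p) := by
  rcases le_total a b with h | h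
  · rw [min_eq_left h]; linarith [rpow_nonneg hb (-p)]
  · rw [min_eq_right h]; linarith [rpow_nonneg ha (-p)]

/-- For `p = d/2` the left side is `ρ_t(0) ρ_{T-t}(0) / ρ_T(0)`. -/
lemma bridge_rpow_neg_le {p t T : ℝ} (hp : 0 ≤ p) (ht : 0 < t) (htT : t < T) :
    (2 * π * t) ^ (-p) * (2 * π * (T - t)) ^ (-p) / (2 * π * T) ^ (-p) ≤
      π ^ (-p) * (t ^ (-p) + (T - t) ^ (-p)) := by
  have hT : 0 < T := ht.trans htT
  have htT' : 0 < T - t := sub_pos.2 htT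
  have hmin : 0 < min t (T - t) := lt_min ht htT'
  calc (2 * π * t) ^ (-p) * (2 * π * (T - t)) ^ (-p) / (2 * π * T) ^ (-p)
      = (2 * π * (t * (T - t) / T)) ^ (-p) := by
        rw [← mul_rpow (by positivity) (by positivity), ← div_rpow (by positivity) (by positivity)]
        congr 1
        field_simp
    _ ≤ (2 * π * (min t (T - t) / 2)) ^ (-p) :=
        rpow_le_rpow_of_nonpos (by positivity)
          (mul_le_mul_of_nonneg_left (half_min_le_mul_sub_div ht htT) (by positivity))
          (neg_nonpos.2 hp)
    _ = π ^ (-p) * min t (T - t) ^ (-p) := by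
        rw [← mul_rpow pi_pos.le hmin.le]
        congr 1
        ring
    _ ≤ π ^ (-p) * (t ^ (-p) + (T - t) ^ (-p)) :=
        mul_le_mul_of_nonneg_left (rpow_neg_min_le_add ht.le htT'.le) (by positivity)

section heatKernel

variable {d : ℕ}

lemma heatKernel_nonneg {t : ℝ} (ht : 0 ≤ t) (z : EuclideanSpace ℝ (Fin d)) :
    0 ≤ heatKernel d t z := by
  unfold heatKernel
  positivity

lemma heatKernel_le {t : ℝ} (ht : 0 ≤ t) (z : EuclideanSpace ℝ (Fin d)) :
    heatKernel d t z ≤ (2 * π * t) ^ (-((d : ℝ) / 2)) := by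
  rw [heatKernel, neg_div, neg_div]
  exact mul_le_of_le_one_right (by positivity) (exp_le_one_iff.2 (neg_nonpos.2 (by positivity)))

lemma heatKernel_apply_zero (t : ℝ) :
    heatKernel d t (0 : EuclideanSpace ℝ (Fin d)) = (2 * π * t) ^ (-((d : ℝ) / 2)) := by
  simp [heatKernel, neg_div]

lemma heatKernel_mul_div_nonneg {t T : ℝ} (ht : 0 ≤ t) (htT : t ≤ T)
    (z : EuclideanSpace ℝ (Fin d)) :
    0 ≤ heatKernel d t z * heatKernel d (T - t) z / heatKernel d T 0 :=
  div_nonneg (mul_nonneg (heatKernel_nonneg ht z) (heatKernel_nonneg (sub_nonneg.2 htT) z))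
    (heatKernel_nonneg (ht.trans htT) 0)

lemma heatKernel_mul_div_le {t T : ℝ} (ht : 0 < t) (htT : t < T)
    (z : EuclideanSpace ℝ (Fin d)) :
    heatKernel d t z * heatKernel d (T - t) z / heatKernel d T 0 ≤
      π ^ (-((d : ℝ) / 2)) * (t ^ (-((d : ℝ) / 2)) + (T - t) ^ (-((d : ℝ) / 2))) := by
  rw [heatKernel_apply_zero]
  refine le_trans ?_ (bridge_rpow_neg_le (by positivity) ht htT)
  have hT : 0 < T := ht.trans htT
  have htT' : 0 ≤ T - t := sub_nonneg.2 htT.le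
  exact div_le_div_of_nonneg_right (mul_le_mul (heatKernel_le ht.le z) (heatKernel_le htT' z)
    (heatKernel_nonneg htT' z) (by positivity)) (by positivity)

lemma integral_heatKernel_bridge_mul_le {V : EuclideanSpace ℝ (Fin d) → ℝ} (hV : ∀ z, 0 ≤ V z)
    (hVint : Integrable V) {t T : ℝ} (ht : 0 < t) (htT : t < T) :
    ∫ z, heatKernel d t z * heatKernel d (T - t) z / heatKernel d T 0 * V (√2 • z) ≤
      π ^ (-((d : ℝ) / 2)) * (t ^ (-((d : ℝ) / 2)) + (T - t) ^ (-((d : ℝ) / 2))) *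
        ∫ z, V z := by
  set c := π ^ (-((d : ℝ) / 2)) * (t ^ (-((d : ℝ) / 2)) + (T - t) ^ (-((d : ℝ) / 2)))
  have hc : 0 ≤ c := by positivity
  have hVint' : Integrable fun z : EuclideanSpace ℝ (Fin d) => V (√2 • z) :=
    (integrable_comp_smul_iff volume V (by positivity)).2 hVint
  calc ∫ z, heatKernel d t z * heatKernel d (T - t) z / heatKernel d T 0 * V (√2 • z)
      ≤ ∫ z, c * V (√2 • z) :=
        integral_mono_of_nonneg
          (ae_of_all _ fun z => mul_nonneg (heatKernel_mul_div_nonneg ht.le htT.le z) (hV _))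
          (hVint'.const_mul c)
          (ae_of_all _ fun z => mul_le_mul_of_nonneg_right (heatKernel_mul_div_le ht htT z) (hV _))
    _ = c * ∫ z, V (√2 • z) := integral_const_mul c _
    _ ≤ c * ∫ z, V z :=
        mul_le_mul_of_nonneg_left
          (integral_comp_smul_le_of_one_le volume hV (one_le_sqrt.2 one_le_two)) hc

end heatKernel

lemma intervalIntegral_rpow_neg_le {p a b : ℝ} (hp : 1 < p) (ha : 0 < a) (hab : a ≤ b) :
    ∫ t in a..b, t ^ (-p) ≤ a ^ (1 - p) / (p - 1) := by
  rw [integral_rpow (Or.inr ⟨by linarith, notMem_uIcc_of_lt ha (ha.trans_le hab)⟩),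
    show -p + 1 = -(p - 1) by ring, div_neg, ← neg_div, neg_sub, show 1 - p = -(p - 1) by ring]
  exact div_le_div_of_nonneg_right (by linarith [rpow_nonneg (ha.le.trans hab) (-(p - 1))])
    (by linarith)

section reflection

variable {p ℓ T : ℝ}

lemma intervalIntegral_sub_rpow_neg :
    ∫ t in ℓ..(T - ℓ), (T - t) ^ (-p) = ∫ t in ℓ..(T - ℓ), t ^ (-p) := by
  simp [intervalIntegral.integral_comp_sub_left (fun s => s ^ (-p)) T]

lemma intervalIntegrable_rpow_neg_of_pos (hℓ : 0 < ℓ) (hℓT : ℓ ≤ T - ℓ) :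
    IntervalIntegrable (fun t : ℝ => t ^ (-p)) volume ℓ (T - ℓ) :=
  intervalIntegral.intervalIntegrable_rpow (Or.inr (notMem_uIcc_of_lt hℓ (hℓ.trans_le hℓT)))

lemma intervalIntegrable_sub_rpow_neg_of_pos (hℓ : 0 < ℓ) (hℓT : ℓ ≤ T - ℓ) :
    IntervalIntegrable (fun t : ℝ => (T - t) ^ (-p)) volume ℓ (T - ℓ) := by
  simpa using ((intervalIntegrable_rpow_neg_of_pos hℓ hℓT).comp_sub_left T).symm

lemma intervalIntegral_rpow_neg_add_sub_rpow_neg_le (hp : 1 < p) (hℓ : 0 < ℓ)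
    (hℓT : ℓ ≤ T - ℓ) :
    ∫ t in ℓ..(T - ℓ), (t ^ (-p) + (T - t) ^ (-p)) ≤ 2 / (p - 1) * ℓ ^ (1 - p) := by
  have hbound := intervalIntegral_rpow_neg_le hp hℓ hℓT
  rw [intervalIntegral.integral_add (intervalIntegrable_rpow_neg_of_pos hℓ hℓT)
    (intervalIntegrable_sub_rpow_neg_of_pos hℓ hℓT), intervalIntegral_sub_rpow_neg]
  calc _ ≤ ℓ ^ (1 - p) / (p - 1) + ℓ ^ (1 - p) / (p - 1) := add_le_add hbound hbound
    _ = 2 / (p - 1) * ℓ ^ (1 - p) := by ring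

end reflection

/-- For `d ≥ 3` there is a constant `C`, depending only on `d`, such that, for every
measurable nonnegative integrable `V`, every `T > 0` and every `0 < ℓ ≤ T/2`,
`∫_ℓ^{T-ℓ} ∫_{ℝ^d} (ρ_t(z) ρ_{T-t}(z) / ρ_T(0)) V(√2 z) dz dt ≤ C ‖V‖_{L¹} ℓ^{-(d-2)/2}`. -/
theorem stmt_3 (d : ℕ) (hd : 3 ≤ d) :
    ∃ C : ℝ,
      ∀ V : EuclideanSpace ℝ (Fin d) → ℝ, Measurable V → (∀ z, 0 ≤ V z) →
        Integrable V volume →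
        ∀ T ℓ : ℝ, 0 < T → 0 < ℓ → ℓ ≤ T / 2 →
          (∫ t in Set.Ioc ℓ (T - ℓ), ∫ z,
              heatKernel d t z * heatKernel d (T - t) z /
                  heatKernel d T (0 : EuclideanSpace ℝ (Fin d)) *
                V (Real.sqrt 2 • z) ∂volume) ≤
            C * (∫ z, V z ∂volume) * ℓ ^ (-((d : ℝ) - 2) / 2) := by
  have hp : 1 < (d : ℝ) / 2 := by
    have : (3 : ℝ) ≤ d := by exact_mod_cast hd
    linarith
  set p : ℝ := (d : ℝ) / 2
  refine ⟨π ^ (-p) * (2 / (p - 1)), fun V _ hV hVint T ℓ _ hℓ hℓT => ?_⟩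
  have hℓT' : ℓ ≤ T - ℓ := by linarith
  have hint : IntegrableOn (fun t => t ^ (-p) + (T - t) ^ (-p)) (Ioc ℓ (T - ℓ)) :=
    ((intervalIntegrable_rpow_neg_of_pos hℓ hℓT').add
      (intervalIntegrable_sub_rpow_neg_of_pos hℓ hℓT')).1
  have htime := intervalIntegral_rpow_neg_add_sub_rpow_neg_le hp hℓ hℓT'
  rw [intervalIntegral.integral_of_le hℓT'] at htime
  calc (∫ t in Ioc ℓ (T - ℓ), ∫ z,
          heatKernel d t z * heatKernel d (T - t) z / heatKernel d T 0 * V (√2 • z))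
      ≤ ∫ t in Ioc ℓ (T - ℓ), π ^ (-p) * (t ^ (-p) + (T - t) ^ (-p)) * ∫ z, V z :=
        setIntegral_mono_on_of_nonneg measurableSet_Ioc
          (fun t ht => integral_nonneg fun z => mul_nonneg
            (heatKernel_mul_div_nonneg (hℓ.trans ht.1).le (by linarith [ht.2]) z) (hV _))
          ((hint.const_mul _).mul_const _)
          (fun t ht => integral_heatKernel_bridge_mul_le hV hVint (hℓ.trans ht.1)
            (by linarith [ht.2]))
    _ = π ^ (-p) * (∫ z, V z) * ∫ t in Ioc ℓ (T - ℓ), (t ^ (-p) + (T - t) ^ (-p)) := by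
        rw [← integral_const_mul]
        simp only [mul_right_comm]
    _ ≤ π ^ (-p) * (∫ z, V z) * (2 / (p - 1) * ℓ ^ (1 - p)) := by
        gcongr
        exact mul_nonneg (by positivity) (integral_nonneg hV)
    _ = π ^ (-p) * (2 / (p - 1)) * (∫ z, V z) * ℓ ^ (-((d : ℝ) - 2) / 2) := by
        rw [show -((d : ℝ) - 2) / 2 = 1 - p by ring]
        ring
end

section
/- Let d ≥ 1 and let ρ_t(x) = (2πt)^{-d/2} exp(−|x|²/(2t)) denote the standard heat kernel on ℝ^d. There exist constants C > 0, c > 0 and δ₀ ∈ (0, 1/2), depending only on d, such that for every δ ∈ (0, δ₀] and every y ∈ ℝ^d, ∫_{ℝ^d} ρ_δ(b) · |ρ_{1/2−δ}(y − b) / ρ_{1/2}(y) − 1| db ≤ C · exp(c·δ·|y|²) · δ^{1/2} · (|y|² + 1). -/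
open MeasureTheory Real

/-! Writing `s = ‖y‖` and `r = ‖b‖`, the ratio `ρ_{1/2-δ}(y-b)/ρ_{1/2}(y)` is `exp F` with
`|F| ≤ B := 2dδ + 8δs² + 2sr + 3r²`, so by `|e^F - 1| ≤ |F| e^{|F|}` the integrand is at most
`ρ_δ(b) B e^B`. By AM-GM, `B ≤ (2d + 73) √δ (s² + 1) e^{r²/(16δ)}` and
`B ≤ d + 24δs² + r²/(8δ)`, so the integrand is at most `√δ (s² + 1) e^{24δs²}` times a constant
times `ρ_δ(b) e^{3r²/(16δ)} = (8/5)^{d/2} ρ_{8δ/5}(b)`, whose integral is `(8/5)^{d/2}`. -/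

open Set

section HeatKernel

variable {d : ℕ}

lemma heatKernel_pos {t : ℝ} (ht : 0 < t) (z : EuclideanSpace ℝ (Fin d)) :
    0 < heatKernel d t z := by
  unfold heatKernel
  have := pi_pos
  positivity

lemma heatKernel_eq_exp {t : ℝ} (ht : 0 < t) (z : EuclideanSpace ℝ (Fin d)) :
    heatKernel d t z = exp (-(d / 2) * log (2 * π * t) - ‖z‖ ^ 2 / (2 * t)) := by
  rw [heatKernel, rpow_def_of_pos (by positivity), ← exp_add]
  ring_nf

lemma integral_heatKernel {t : ℝ} (ht : 0 < t) : ∫ z, heatKernel d t z = 1 := by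
  have hπ := pi_pos
  have hexp : (fun z : EuclideanSpace ℝ (Fin d) => exp (-‖z‖ ^ 2 / (2 * t))) =
      fun z => exp (-(2 * t)⁻¹ * ‖z‖ ^ 2) := by
    ext z; ring_nf
  rw [show (fun z => heatKernel d t z) = fun z => (2 * π * t) ^ (-(d : ℝ) / 2) *
      exp (-‖z‖ ^ 2 / (2 * t)) from rfl, integral_const_mul, hexp,
    GaussianFourier.integral_rexp_neg_mul_sq_norm (by positivity), finrank_euclideanSpace_fin,
    show π / (2 * t)⁻¹ = 2 * π * t by field_simp, neg_div,
    rpow_neg (by positivity), inv_mul_cancel₀ (by positivity)]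

lemma integrable_heatKernel {t : ℝ} (ht : 0 < t) : Integrable (heatKernel d t) :=
  .of_integral_ne_zero <| (integral_heatKernel ht).symm ▸ one_ne_zero

lemma heatKernel_div_heatKernel {s t : ℝ} (hs : 0 < s) (ht : 0 < t)
    (x y : EuclideanSpace ℝ (Fin d)) :
    heatKernel d s x / heatKernel d t y =
      exp (d / 2 * log (t / s) + ‖y‖ ^ 2 / (2 * t) - ‖x‖ ^ 2 / (2 * s)) := by
  have hπ := pi_pos
  rw [heatKernel_eq_exp hs, heatKernel_eq_exp ht, ← exp_sub,
    show t / s = (2 * π * t) / (2 * π * s) by field_simp, log_div (by positivity) (by positivity)]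
  ring_nf

lemma heatKernel_mul_exp {s t : ℝ} (hs : 0 < s) (ht : 0 < t) (z : EuclideanSpace ℝ (Fin d)) :
    heatKernel d s z * exp ((1 / (2 * s) - 1 / (2 * t)) * ‖z‖ ^ 2) =
      (t / s) ^ ((d : ℝ) / 2) * heatKernel d t z := by
  have hπ := pi_pos
  rw [heatKernel_eq_exp hs, heatKernel_eq_exp ht, rpow_def_of_pos (by positivity), ← exp_add,
    ← exp_add, show t / s = (2 * π * t) / (2 * π * s) by field_simp,
    log_div (by positivity) (by positivity)]
  ring_nf

end HeatKernel

lemma abs_exp_sub_one_le {x B : ℝ} (h : |x| ≤ B) : |exp x - 1| ≤ B * exp B := by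
  have hB : 0 ≤ B := (abs_nonneg x).trans h
  rcases le_total 0 x with hx | hx
  · rw [abs_of_nonneg hx] at h
    have hx1 : exp x - 1 ≤ x * exp x := by
      have := mul_le_mul_of_nonneg_right (add_one_le_exp (-x)) (exp_nonneg x)
      rw [← exp_add, neg_add_cancel, exp_zero] at this
      linarith
    rw [abs_of_nonneg (by linarith [add_one_le_exp x])]
    exact hx1.trans (mul_le_mul h (exp_le_exp.mpr h) (exp_nonneg x) hB)
  · rw [abs_of_nonpos hx] at h
    rw [abs_of_nonpos (by linarith [exp_le_one_iff.mpr hx])]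
    nlinarith [add_one_le_exp x, one_le_exp hB]

lemma inv_one_sub_two_mul_mem_Icc {δ : ℝ} (hδ₀ : 0 ≤ δ) (hδ : δ ≤ 1 / 4) :
    (1 - 2 * δ)⁻¹ ∈ Icc 1 (1 + 4 * δ) := by
  have h : 0 < 1 - 2 * δ := by linarith
  constructor
  · exact one_le_inv₀ h |>.mpr (by linarith)
  · rw [inv_le_iff_one_le_mul₀ h]
    nlinarith

def logRatioBound (d : ℕ) (δ s r : ℝ) : ℝ := 2 * d * δ + 8 * δ * s ^ 2 + 2 * s * r + 3 * r ^ 2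

lemma abs_log_ratio_le_logRatioBound {E : Type*} [SeminormedAddCommGroup E] (d : ℕ)
    {δ u : ℝ} (hδ : δ ≤ 1 / 4) (hu : u ∈ Icc 1 (1 + 4 * δ)) (y b : E) :
    |d / 2 * log u + ‖y‖ ^ 2 - u * ‖y - b‖ ^ 2| ≤ logRatioBound d δ ‖y‖ ‖b‖ := by
  obtain ⟨hu₁, hu₂⟩ := hu
  have hd : (0 : ℝ) ≤ d / 2 := by positivity
  have hlog₀ : 0 ≤ log u := log_nonneg hu₁
  have hlog₁ : log u ≤ 4 * δ := by linarith [log_le_sub_one_of_pos (by linarith : 0 < u)]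
  obtain ⟨hyb₁, hyb₂⟩ := abs_le.mp (abs_norm_sub_norm_le y b)
  have hq₁ : (‖y‖ - ‖b‖) ^ 2 ≤ ‖y - b‖ ^ 2 := sq_le_sq' hyb₁ hyb₂
  have hq₂ : ‖y - b‖ ^ 2 ≤ (‖y‖ + ‖b‖) ^ 2 :=
    pow_le_pow_left₀ (norm_nonneg _) (norm_sub_le y b) 2
  rw [logRatioBound, abs_le]
  constructor
  · nlinarith [mul_nonneg hd hlog₀, mul_le_mul hu₂ hq₂ (sq_nonneg _) (by linarith),
      norm_nonneg y, norm_nonneg b, mul_nonneg (norm_nonneg y) (norm_nonneg b)]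
  · nlinarith [mul_le_mul_of_nonneg_left hlog₁ hd,
      mul_le_mul_of_nonneg_right hu₁ (sq_nonneg ‖y - b‖),
      mul_nonneg (norm_nonneg y) (norm_nonneg b)]

lemma logRatioBound_le_add_div (d : ℕ) {δ : ℝ} (hδ₀ : 0 < δ) (hδ : δ ≤ 1 / 48) (s r : ℝ) :
    logRatioBound d δ s r ≤ d + 24 * δ * s ^ 2 + r ^ 2 / (8 * δ) := by
  have hd : (0 : ℝ) ≤ d := d.cast_nonneg
  rw [logRatioBound, ← sub_le_iff_le_add', le_div_iff₀ (by positivity)]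
  nlinarith [sq_nonneg (16 * δ * s - r), mul_le_mul_of_nonneg_left (by linarith : 2 * δ ≤ 1) hd,
    mul_le_mul_of_nonneg_right (by linarith : 48 * δ ≤ 1) (sq_nonneg r)]

lemma logRatioBound_le_sqrt_mul_exp (d : ℕ) {δ : ℝ} (hδ₀ : 0 < δ) (hδ : δ ≤ 1) (s r : ℝ) :
    logRatioBound d δ s r ≤ (2 * d + 73) * √δ * (s ^ 2 + 1) * exp (r ^ 2 / (16 * δ)) := by
  set P := √δ
  set E := exp (r ^ 2 / (16 * δ))
  have hd : (0 : ℝ) ≤ d := d.cast_nonneg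
  have hP : 0 < P := sqrt_pos.mpr hδ₀
  have hPP : P * P = δ := mul_self_sqrt hδ₀.le
  have hδP : δ ≤ P := by nlinarith [sqrt_le_one.mpr hδ]
  have hE : 1 ≤ E := one_le_exp (by positivity)
  have hrE : r ^ 2 ≤ 16 * δ * E := by
    have := add_one_le_exp (r ^ 2 / (16 * δ))
    rw [← div_le_iff₀' (by positivity)]
    linarith
  have hsr : 2 * s * r ≤ P * (s ^ 2 + 16 * E) := by
    refine le_of_mul_le_mul_right ?_ hP
    nlinarith [sq_nonneg (P * s - r)]
  calc logRatioBound d δ s r ≤ P * (2 * d + 9 * s ^ 2 + 64 * E) := by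
        rw [logRatioBound]
        nlinarith [mul_le_mul_of_nonneg_left hδP hd, mul_le_mul_of_nonneg_right hδP (sq_nonneg s),
          mul_le_mul_of_nonneg_right hδP (by positivity : 0 ≤ E)]
    _ ≤ (2 * d + 73) * P * (s ^ 2 + 1) * E := by
        have hs : 0 ≤ s ^ 2 := sq_nonneg s
        rw [show (2 * d + 73) * P * (s ^ 2 + 1) * E = P * ((2 * d + 73) * ((s ^ 2 + 1) * E)) by
          ring]
        gcongr
        nlinarith [mul_le_mul_of_nonneg_left hE hd, mul_le_mul_of_nonneg_left hE hs]

lemma heatKernel_mul_abs_div_sub_one_le {d : ℕ} {δ : ℝ} (hδ₀ : 0 < δ) (hδ : δ ≤ 1 / 48)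
    (y b : EuclideanSpace ℝ (Fin d)) :
    heatKernel d δ b * |heatKernel d (1 / 2 - δ) (y - b) / heatKernel d (1 / 2) y - 1| ≤
      (2 * d + 73) * exp d * exp (24 * δ * ‖y‖ ^ 2) * √δ * (‖y‖ ^ 2 + 1) *
        ((8 / 5) ^ ((d : ℝ) / 2) * heatKernel d (8 * δ / 5) b) := by
  set u := (1 - 2 * δ)⁻¹
  set B := logRatioBound d δ ‖y‖ ‖b‖
  have hratio : heatKernel d (1 / 2 - δ) (y - b) / heatKernel d (1 / 2) y =
      exp (d / 2 * log u + ‖y‖ ^ 2 - u * ‖y - b‖ ^ 2) := by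
    rw [heatKernel_div_heatKernel (by linarith) (by norm_num)]
    congr 1
    simp only [u]
    field_simp
  have hB : |d / 2 * log u + ‖y‖ ^ 2 - u * ‖y - b‖ ^ 2| ≤ B :=
    abs_log_ratio_le_logRatioBound d (by linarith)
      (inv_one_sub_two_mul_mem_Icc hδ₀.le (by linarith)) y b
  have hexp : exp B ≤ exp d * exp (24 * δ * ‖y‖ ^ 2) * exp (‖b‖ ^ 2 / (8 * δ)) := by
    rw [← exp_add, ← exp_add]
    exact exp_le_exp.mpr (logRatioBound_le_add_div d hδ₀ hδ _ _)
  calc heatKernel d δ b * |heatKernel d (1 / 2 - δ) (y - b) / heatKernel d (1 / 2) y - 1|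
      ≤ heatKernel d δ b * (B * exp B) := by
        rw [hratio]
        exact mul_le_mul_of_nonneg_left (abs_exp_sub_one_le hB) (heatKernel_pos hδ₀ b).le
    _ ≤ heatKernel d δ b * ((2 * d + 73) * √δ * (‖y‖ ^ 2 + 1) * exp (‖b‖ ^ 2 / (16 * δ)) *
          (exp d * exp (24 * δ * ‖y‖ ^ 2) * exp (‖b‖ ^ 2 / (8 * δ)))) := by
        refine mul_le_mul_of_nonneg_left ?_ (heatKernel_pos hδ₀ b).le
        exact mul_le_mul (logRatioBound_le_sqrt_mul_exp d hδ₀ (by linarith) _ _) hexp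
          (exp_nonneg _) (by positivity)
    _ = (2 * d + 73) * exp d * exp (24 * δ * ‖y‖ ^ 2) * √δ * (‖y‖ ^ 2 + 1) *
          (heatKernel d δ b * exp ((1 / (2 * δ) - 1 / (2 * (8 * δ / 5))) * ‖b‖ ^ 2)) := by
        rw [show (1 / (2 * δ) - 1 / (2 * (8 * δ / 5))) * ‖b‖ ^ 2 =
          ‖b‖ ^ 2 / (16 * δ) + ‖b‖ ^ 2 / (8 * δ) by field_simp; ring, exp_add]
        ring
    _ = _ := by
        rw [heatKernel_mul_exp hδ₀ (by positivity), show 8 * δ / 5 / δ = 8 / 5 by field_simp]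

theorem stmt_5_general (d : ℕ) :
    ∃ C c δ₀ : ℝ, 0 < C ∧ 0 < c ∧ 0 < δ₀ ∧ δ₀ < 1 / 2 ∧
      ∀ δ : ℝ, 0 < δ → δ ≤ δ₀ → ∀ y : EuclideanSpace ℝ (Fin d),
        (∫ b, heatKernel d δ b *
            |heatKernel d (1 / 2 - δ) (y - b) / heatKernel d (1 / 2) y - 1| ∂volume) ≤
          C * Real.exp (c * δ * ‖y‖ ^ 2) * δ ^ ((1 : ℝ) / 2) * (‖y‖ ^ 2 + 1) := by
  refine ⟨(2 * d + 73) * exp d * (8 / 5) ^ ((d : ℝ) / 2), 24, 1 / 48,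
    by positivity, by norm_num, by norm_num, by norm_num, fun δ hδ₀ hδ y => ?_⟩
  calc (∫ b, heatKernel d δ b *
          |heatKernel d (1 / 2 - δ) (y - b) / heatKernel d (1 / 2) y - 1|)
      ≤ ∫ b, (2 * d + 73) * exp d * exp (24 * δ * ‖y‖ ^ 2) * √δ * (‖y‖ ^ 2 + 1) *
          ((8 / 5) ^ ((d : ℝ) / 2) * heatKernel d (8 * δ / 5) b) :=
        integral_mono_of_nonneg
          (.of_forall fun b => mul_nonneg (heatKernel_pos hδ₀ b).le (abs_nonneg _))
          (((integrable_heatKernel (by positivity)).const_mul _).const_mul _)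
          (.of_forall (heatKernel_mul_abs_div_sub_one_le hδ₀ hδ y))
    _ = _ := by
        rw [integral_const_mul, integral_const_mul, integral_heatKernel (by positivity),
          sqrt_eq_rpow]
        ring

/-- There are constants `C > 0`, `c > 0` and `δ₀ ∈ (0, 1/2)`, depending only on `d`, with
`∫ ρ_δ(b) |ρ_{1/2-δ}(y-b)/ρ_{1/2}(y) - 1| db ≤ C exp(cδ|y|²) δ^{1/2} (|y|² + 1)`
for all `δ ∈ (0, δ₀]` and `y ∈ ℝ^d`. -/
theorem stmt_5 (d : ℕ) (hd : 1 ≤ d) :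
    ∃ C c δ₀ : ℝ, 0 < C ∧ 0 < c ∧ 0 < δ₀ ∧ δ₀ < 1 / 2 ∧
      ∀ δ : ℝ, 0 < δ → δ ≤ δ₀ → ∀ y : EuclideanSpace ℝ (Fin d),
        (∫ b, heatKernel d δ b *
            |heatKernel d (1 / 2 - δ) (y - b) / heatKernel d (1 / 2) y - 1| ∂volume) ≤
          C * Real.exp (c * δ * ‖y‖ ^ 2) * δ ^ ((1 : ℝ) / 2) * (‖y‖ ^ 2 + 1) :=
  stmt_5_general d
end
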